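/- Let K be a field of characteristic zero and (Q, ≼) a finite poset. Then the dimension of the annihilator R_Q^⊥ of the relation space R_Q with respect to the bilinear form ⟨·,·⟩ equals 2·(#Q)² + 3·#Q − 4·int(Q), where #Q is the cardinality of Q. -/
import Mathlib


open scoped Classical

/-- The minimum of two comparable elements of a poset. -/
noncomputable def pmin {Q : Type*} [PartialOrder Q] (a b : Q) : Q :=
  if a ≤ b then a else b

/-- The standard basis vector `e(a,i,b)` of `V = (Q × {1,2} × Q) → K` (with `0 : Fin 2`
encoding position `1` and `1 : Fin 2` encoding position `2`). -/
noncomputable def e (K : Type*) [Field K] {Q : Type*} (a : Q) (i : Fin 2) (b : Q) :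
    (Q × Fin 2 × Q) → K :=
  fun p => if p = (a, i, b) then 1 else 0

/-- The space of relations `R_Q` of the operad `As(Q)`. -/
noncomputable def relSpace (K : Type*) [Field K] (Q : Type*) [PartialOrder Q] :
    Submodule K ((Q × Fin 2 × Q) → K) :=
  Submodule.span K
    {x | ∃ a b : Q, (a ≤ b ∨ b ≤ a) ∧
      (x = e K a 0 b - e K (pmin a b) 1 (pmin a b) ∨
       x = e K (pmin a b) 0 (pmin a b) - e K a 1 b)}

/-- The bilinear form on `V` with `⟨e(a,i,b), e(a',i',b')⟩ = 1` if `(a,b) = (a',b')` and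
`i = i' = 1`, `= −1` if `(a,b) = (a',b')` and `i = i' = 2`, and `0` otherwise. -/
noncomputable def bform {K : Type*} [Field K] {Q : Type*} [Fintype Q]
    (u w : (Q × Fin 2 × Q) → K) : K :=
  ∑ a : Q, ∑ b : Q, (u (a, 0, b) * w (a, 0, b) - u (a, 1, b) * w (a, 1, b))

lemma bform_add {K : Type*} [Field K] {Q : Type*} [Fintype Q]
    (r u v : (Q × Fin 2 × Q) → K) :
    bform r (u + v) = bform r u + bform r v := by
  unfold bform
  rw [← Finset.sum_add_distrib]
  refine Finset.sum_congr rfl fun a _ => ?_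
  rw [← Finset.sum_add_distrib]
  refine Finset.sum_congr rfl fun b _ => ?_
  simp only [Pi.add_apply]
  ring

lemma bform_smul {K : Type*} [Field K] {Q : Type*} [Fintype Q]
    (c : K) (r v : (Q × Fin 2 × Q) → K) :
    bform r (c • v) = c * bform r v := by
  unfold bform
  rw [Finset.mul_sum]
  refine Finset.sum_congr rfl fun a _ => ?_
  rw [Finset.mul_sum]
  refine Finset.sum_congr rfl fun b _ => ?_
  simp only [Pi.smul_apply, smul_eq_mul]
  ring

/-- The annihilator `S^⊥ = {v ∈ V : ⟨r, v⟩ = 0 for all r ∈ S}` of a subspace `S` of `V`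
with respect to the bilinear form `⟨·,·⟩`. -/
noncomputable def annih (K : Type*) [Field K] (Q : Type*) [Fintype Q]
    (S : Submodule K ((Q × Fin 2 × Q) → K)) : Submodule K ((Q × Fin 2 × Q) → K) where
  carrier := {v | ∀ r ∈ S, bform r v = 0}
  add_mem' := by
    intro u v hu hv r hr
    rw [bform_add, hu r hr, hv r hr, add_zero]
  zero_mem' := by
    intro r hr
    simp [bform]
  smul_mem' := by
    intro c v hv r hr
    rw [bform_smul, hv r hr, mul_zero]

set_option linter.unusedSectionVars false
section Aux
variable {K : Type*} [Field K] {Q : Type*} [Fintype Q] [PartialOrder Q]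

lemma bform_zero_left (v : (Q × Fin 2 × Q) → K) : bform (0 : (Q × Fin 2 × Q) → K) v = 0 := by
  simp [bform]

lemma bform_add_left (r s v : (Q × Fin 2 × Q) → K) :
    bform (r + s) v = bform r v + bform s v := by
  unfold bform
  rw [← Finset.sum_add_distrib]
  refine Finset.sum_congr rfl fun a _ => ?_
  rw [← Finset.sum_add_distrib]
  refine Finset.sum_congr rfl fun b _ => ?_
  simp only [Pi.add_apply]; ring

lemma bform_smul_left (c : K) (r v : (Q × Fin 2 × Q) → K) :
    bform (c • r) v = c * bform r v := by
  unfold bform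
  rw [Finset.mul_sum]
  refine Finset.sum_congr rfl fun a _ => ?_
  rw [Finset.mul_sum]
  refine Finset.sum_congr rfl fun b _ => ?_
  simp only [Pi.smul_apply, smul_eq_mul]; ring

lemma bform_e0 (a b : Q) (v : (Q × Fin 2 × Q) → K) :
    bform (e K a 0 b) v = v (a, 0, b) := by
  unfold bform e
  have : ∀ x y : Q,
      ((if ((x, (0:Fin 2), y) : Q × Fin 2 × Q) = (a, 0, b) then (1:K) else 0) * v (x,0,y)
        - (if ((x, (1:Fin 2), y) : Q × Fin 2 × Q) = (a, 0, b) then (1:K) else 0) * v (x,1,y))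
      = if x = a ∧ y = b then v (x,0,y) else 0 := by
    intro x y
    by_cases h : x = a ∧ y = b
    · obtain ⟨rfl, rfl⟩ := h
      simp [Prod.ext_iff]
    · simp [Prod.ext_iff, h, if_neg] <;>
        (intro hx hy; exact absurd ⟨hx, hy⟩ h)
  simp only [this, ite_and]
  simp [Finset.sum_ite_eq']

lemma bform_e1 (a b : Q) (v : (Q × Fin 2 × Q) → K) :
    bform (e K a 1 b) v = - v (a, 1, b) := by
  unfold bform e
  have : ∀ x y : Q,
      ((if ((x, (0:Fin 2), y) : Q × Fin 2 × Q) = (a, 1, b) then (1:K) else 0) * v (x,0,y)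
        - (if ((x, (1:Fin 2), y) : Q × Fin 2 × Q) = (a, 1, b) then (1:K) else 0) * v (x,1,y))
      = if x = a ∧ y = b then - v (x,1,y) else 0 := by
    intro x y
    by_cases h : x = a ∧ y = b
    · obtain ⟨rfl, rfl⟩ := h
      simp [Prod.ext_iff]
    · simp [Prod.ext_iff, h, if_neg] <;>
        (intro hx hy; exact absurd ⟨hx, hy⟩ h)
  simp only [this, ite_and]
  simp [Finset.sum_ite_eq']

end Aux

section Aux2
variable {K : Type*} [Field K] {Q : Type*} [Fintype Q] [PartialOrder Q]

/-- membership characterization -/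
lemma mem_annih_iff (v : (Q × Fin 2 × Q) → K) :
    v ∈ annih K Q (relSpace K Q) ↔
      ∀ a b : Q, (a ≤ b ∨ b ≤ a) →
        v (a, 0, b) = - v (pmin a b, 1, pmin a b) ∧
        v (a, 1, b) = - v (pmin a b, 0, pmin a b) := by
  constructor
  · intro hv a b hab
    have h1 : bform (e K a 0 b - e K (pmin a b) 1 (pmin a b)) v = 0 :=
      hv _ (Submodule.subset_span ⟨a, b, hab, Or.inl rfl⟩)
    have h2 : bform (e K (pmin a b) 0 (pmin a b) - e K a 1 b) v = 0 :=
      hv _ (Submodule.subset_span ⟨a, b, hab, Or.inr rfl⟩)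
    rw [sub_eq_add_neg, bform_add_left, ← neg_one_smul K, bform_smul_left,
      bform_e0, bform_e1] at h1 h2
    constructor
    · linear_combination h1
    · linear_combination h2
  · intro hv r hr
    induction hr using Submodule.span_induction with
    | mem x hx =>
      obtain ⟨a, b, hab, hx | hx⟩ := hx <;> subst hx <;>
        rw [sub_eq_add_neg, bform_add_left, ← neg_one_smul K, bform_smul_left,
          bform_e0, bform_e1]
      · linear_combination (hv a b hab).1
      · linear_combination (hv a b hab).2
    | zero => exact bform_zero_left v
    | add x y _ _ hx hy => rw [bform_add_left, hx, hy, add_zero]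
    | smul c x _ hx => rw [bform_smul_left, hx, mul_zero]

end Aux2

/-- Free index set -/
def FreeIdx (Q : Type*) [PartialOrder Q] : Type _ :=
  {p : Q × Fin 2 × Q // ¬(p.1 ≤ p.2.2 ∨ p.2.2 ≤ p.1) ∨ (p.2.1 = 0 ∧ p.1 = p.2.2)}

noncomputable instance (Q : Type*) [PartialOrder Q] [Fintype Q] : Fintype (FreeIdx Q) := by
  unfold FreeIdx; infer_instance

section Aux3
variable {K : Type*} [Field K] {Q : Type*} [Fintype Q] [PartialOrder Q]

lemma pmin_self (a : Q) : pmin a a = a := by simp [pmin]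

/-- the extension of f : FreeIdx → K to all coordinates -/
noncomputable def extendF (f : FreeIdx Q → K) : (Q × Fin 2 × Q) → K :=
  fun p =>
    if h : p.1 ≤ p.2.2 ∨ p.2.2 ≤ p.1 then
      (if p.2.1 = 0 then
        f ⟨(pmin p.1 p.2.2, 0, pmin p.1 p.2.2), Or.inr ⟨rfl, rfl⟩⟩
      else
        - f ⟨(pmin p.1 p.2.2, 0, pmin p.1 p.2.2), Or.inr ⟨rfl, rfl⟩⟩)
    else f ⟨p, Or.inl h⟩

lemma extendF_comp0 {a b : Q} (h : a ≤ b ∨ b ≤ a) (f : FreeIdx Q → K) :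
    extendF f (a, 0, b) = f ⟨(pmin a b, 0, pmin a b), Or.inr ⟨rfl, rfl⟩⟩ := by
  simp [extendF, h]

lemma extendF_comp1 {a b : Q} (h : a ≤ b ∨ b ≤ a) (f : FreeIdx Q → K) :
    extendF f (a, 1, b) = - f ⟨(pmin a b, 0, pmin a b), Or.inr ⟨rfl, rfl⟩⟩ := by
  simp [extendF, h]

lemma extendF_mem (f : FreeIdx Q → K) : extendF f ∈ annih K Q (relSpace K Q) := by
  rw [mem_annih_iff]
  intro a b hab
  have hm : pmin a b ≤ pmin a b ∨ pmin a b ≤ pmin a b := Or.inl le_rfl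
  constructor
  · rw [extendF_comp0 hab, extendF_comp1 hm]
    simp [pmin_self]
  · rw [extendF_comp1 hab, extendF_comp0 hm]
    simp [pmin_self]

noncomputable def restr : annih K Q (relSpace K Q) →ₗ[K] (FreeIdx Q → K) where
  toFun v := fun q => v.1 q.1
  map_add' u v := rfl
  map_smul' c v := rfl

lemma restr_bij : Function.Bijective (restr (K := K) (Q := Q)) := by
  constructor
  · intro u v huv
    ext p
    obtain ⟨a, i, b⟩ := p
    have hgu := (mem_annih_iff u.1).mp u.2
    have hgv := (mem_annih_iff v.1).mp v.2
    have key : ∀ q : FreeIdx Q, u.1 q.1 = v.1 q.1 := fun q => congrFun huv q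
    by_cases hab : a ≤ b ∨ b ≤ a
    · set m := pmin a b with hm
      have hmm : m ≤ m ∨ m ≤ m := Or.inl le_rfl
      have h0 : u.1 (m, 0, m) = v.1 (m, 0, m) :=
        key ⟨(m, 0, m), Or.inr ⟨rfl, rfl⟩⟩
      have h1 : u.1 (m, 1, m) = v.1 (m, 1, m) := by
        rw [(hgu m m hmm).2, (hgv m m hmm).2, pmin_self, h0]
      fin_cases i
      · show u.1 (a, 0, b) = v.1 (a, 0, b)
        rw [(hgu a b hab).1, (hgv a b hab).1, ← hm, h1]
      · show u.1 (a, 1, b) = v.1 (a, 1, b)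
        rw [(hgu a b hab).2, (hgv a b hab).2, ← hm, h0]
    · exact key ⟨(a, i, b), Or.inl hab⟩
  · intro f
    refine ⟨⟨extendF f, extendF_mem f⟩, ?_⟩
    funext q
    obtain ⟨⟨a, i, b⟩, hq⟩ := q
    show extendF f (a, i, b) = f ⟨(a, i, b), hq⟩
    rcases hq with hq | hq
    · simp [extendF, hq]
    · obtain ⟨hi, hab⟩ := hq
      simp only at hi hab
      subst hi; subst hab
      rw [extendF_comp0 (Or.inl le_rfl)]
      congr 1
      exact Subtype.ext (by simp [pmin_self])

lemma finrank_annih_eq_card :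
    Module.finrank K (annih K Q (relSpace K Q)) = Fintype.card (FreeIdx Q) := by
  have := LinearEquiv.finrank_eq (LinearEquiv.ofBijective _ (restr_bij (K := K) (Q := Q)))
  rw [this, Module.finrank_pi]

end Aux3

section Count
variable {Q : Type*} [Fintype Q] [PartialOrder Q]

lemma ncard_eq_cardI :
    Set.ncard {p : Q × Q | p.1 ≤ p.2} =
      (Finset.univ.filter (fun p : Q × Q => p.1 ≤ p.2)).card := by
  rw [Set.ncard_eq_toFinset_card']
  congr 1
  ext p
  simp

lemma card_diag :
    (Finset.univ.filter (fun p : Q × Q => p.1 = p.2)).card = Fintype.card Q := by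
  rw [← Fintype.card_subtype]
  exact Fintype.card_congr
    { toFun := fun q => q.1.1
      invFun := fun a => ⟨(a, a), rfl⟩
      left_inv := fun ⟨⟨x, y⟩, h⟩ => by
        simp only [Finset.mem_filter] at h ⊢
        subst h
        rfl
      right_inv := fun a => rfl }

lemma card_comp :
    (Finset.univ.filter (fun p : Q × Q => p.1 ≤ p.2 ∨ p.2 ≤ p.1)).card + Fintype.card Q =
      2 * (Finset.univ.filter (fun p : Q × Q => p.1 ≤ p.2)).card := by
  classical
  set I := Finset.univ.filter (fun p : Q × Q => p.1 ≤ p.2) with hI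
  set J := Finset.univ.filter (fun p : Q × Q => p.2 ≤ p.1) with hJ
  have hC : Finset.univ.filter (fun p : Q × Q => p.1 ≤ p.2 ∨ p.2 ≤ p.1) = I ∪ J :=
    Finset.filter_or _ _ _
  have hIJ : I ∩ J = Finset.univ.filter (fun p : Q × Q => p.1 = p.2) := by
    rw [hI, hJ, ← Finset.filter_and]
    apply Finset.filter_congr
    intro p _
    constructor
    · exact fun h => le_antisymm h.1 h.2
    · exact fun h => ⟨le_of_eq h, ge_of_eq h⟩
  have hJI : J.card = I.card := by
    apply Finset.card_bij (fun p _ => (p.2, p.1))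
    · intro p hp
      simp only [hJ, Finset.mem_filter, Finset.mem_univ, true_and] at hp ⊢
      simpa [hI] using hp
    · intro p hp q hq h
      exact Prod.ext (congrArg Prod.snd h) (congrArg Prod.fst h)
    · intro p hp
      refine ⟨(p.2, p.1), ?_, rfl⟩
      simp only [hI, Finset.mem_filter, Finset.mem_univ, true_and] at hp
      simp [hJ, hp]
  have := Finset.card_union_add_card_inter I J
  rw [hC, hIJ, card_diag] at *
  omega

lemma card_freeIdx :
    Fintype.card (FreeIdx Q) +
      2 * (Finset.univ.filter (fun p : Q × Q => p.1 ≤ p.2 ∨ p.2 ≤ p.1)).card =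
      2 * Fintype.card Q ^ 2 + Fintype.card Q := by
  classical
  have h1 : Fintype.card (FreeIdx Q) =
      ∑ a : Q, ∑ b : Q,
        ((if ¬(a ≤ b ∨ b ≤ a) ∨ a = b then 1 else 0) +
         (if ¬(a ≤ b ∨ b ≤ a) then 1 else 0)) := by
    rw [show Fintype.card (FreeIdx Q) = Fintype.card
        {p : Q × Fin 2 × Q // ¬(p.1 ≤ p.2.2 ∨ p.2.2 ≤ p.1) ∨ (p.2.1 = 0 ∧ p.1 = p.2.2)}
      from rfl]
    rw [Fintype.card_subtype, Finset.card_filter]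
    rw [Fintype.sum_prod_type]
    refine Finset.sum_congr rfl fun a _ => ?_
    rw [Fintype.sum_prod_type, Fin.sum_univ_two]
    rw [← Finset.sum_add_distrib]
    refine Finset.sum_congr rfl fun b _ => ?_
    congr 1
    · simp
    · simp
  have h2 : (Finset.univ.filter (fun p : Q × Q => p.1 ≤ p.2 ∨ p.2 ≤ p.1)).card =
      ∑ a : Q, ∑ b : Q, (if a ≤ b ∨ b ≤ a then 1 else 0) := by
    rw [Finset.card_filter, Fintype.sum_prod_type]
  rw [h1, h2, Finset.mul_sum]
  rw [← Finset.sum_add_distrib]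
  have key : ∀ a : Q, (∑ b : Q,
        ((if ¬(a ≤ b ∨ b ≤ a) ∨ a = b then 1 else 0) +
         (if ¬(a ≤ b ∨ b ≤ a) then 1 else 0)) +
      2 * ∑ b : Q, (if a ≤ b ∨ b ≤ a then 1 else 0)) =
      ∑ b : Q, (2 + if a = b then 1 else 0) := by
    intro a
    rw [Finset.mul_sum, ← Finset.sum_add_distrib]
    refine Finset.sum_congr rfl fun b _ => ?_
    by_cases hab : a ≤ b ∨ b ≤ a
    · by_cases heq : a = b
      · simp [hab, heq]
      · simp [hab, heq]
    · have heq : ¬ a = b := fun h => hab (Or.inl (le_of_eq h))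
      simp [hab, heq]
  rw [Finset.sum_congr rfl fun a _ => key a]
  have : ∀ a : Q, (∑ b : Q, (2 + if a = b then 1 else 0)) = 2 * Fintype.card Q + 1 := by
    intro a
    rw [Finset.sum_add_distrib, Finset.sum_const, Finset.sum_ite_eq Finset.univ a]
    simp [two_mul, mul_comm]
  rw [Finset.sum_congr rfl fun a _ => this a, Finset.sum_const]
  simp [Finset.card_univ]
  ring

end Count


/-- The dimension of the annihilator `R_Q^⊥` of the relation space (the space of
relations of the Koszul dual `As(Q)^!`) equals `2·(#Q)² + 3·#Q − 4·int(Q)`, where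
`int(Q)` is the number of pairs `(a,b)` with `a ≼ b`. -/
theorem finrank_annihilator_relSpace {K Q : Type*} [Field K] [CharZero K]
    [Fintype Q] [PartialOrder Q] :
    Module.finrank K (annih K Q (relSpace K Q)) =
      2 * Fintype.card Q ^ 2 + 3 * Fintype.card Q
        - 4 * Set.ncard {p : Q × Q | p.1 ≤ p.2} := by
  rw [finrank_annih_eq_card, ncard_eq_cardI]
  have h2 := card_comp (Q := Q)
  have h3 := card_freeIdx (Q := Q)
  omega
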